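/- arXiv:2504.04293 — 2 statements merged into one kernel-verified Lean document; each statement's English description precedes it below -/
import Mathlib

section
/- Fisher's inequality for Steiner 2-designs: if a Steiner design S(2,k,v) exists with v > k ≥ 2, then v ≥ k² - k + 1. -/
/-- A Steiner design `S(2,k,v)`. -/
def IsSteinerSystem (v k : ℕ) (D : Finset (Finset (Fin v))) : Prop :=
  (∀ B ∈ D, B.card = k) ∧
  (∀ p : Finset (Fin v), p.card = 2 → ∃! B, B ∈ D ∧ p ⊆ B)

/-- Fisher's inequality for Steiner 2-designs: if a Steiner design `S(2,k,v)` exists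
with `v > k ≥ 2`, then `v ≥ k² - k + 1`. -/
theorem steiner_fisher (v k : ℕ) (hk : 2 ≤ k) (hkv : k < v)
    (hex : ∃ D : Finset (Finset (Fin v)), IsSteinerSystem v k D) :
    v ≥ k ^ 2 - k + 1 := by
  classical
  obtain ⟨D, hcard, huniq⟩ := hex
  have hv3 : 3 ≤ v := by omega
  -- two distinct points
  set a : Fin v := ⟨0, by omega⟩ with ha
  set b : Fin v := ⟨1, by omega⟩ with hb
  have hab : a ≠ b := by simp [ha, hb, Fin.ext_iff]
  -- a block B0
  obtain ⟨B0, ⟨hB0D, _⟩, _⟩ := huniq {a, b} (Finset.card_pair hab)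
  have hB0card : B0.card = k := hcard B0 hB0D
  -- a point p outside B0
  have hlt : B0.card < (Finset.univ : Finset (Fin v)).card := by
    simp [hB0card]; omega
  have hssub : B0 ⊂ Finset.univ :=
    Finset.ssubset_univ_iff.mpr (fun h => by simp [h, Finset.card_univ] at hlt)
  obtain ⟨p, -, hpB0⟩ := Finset.exists_of_ssubset hssub
  -- uniqueness of the block through two distinct points
  have uniq2 : ∀ B B', B ∈ D → B' ∈ D → ∀ x y : Fin v, x ≠ y →
      x ∈ B → y ∈ B → x ∈ B' → y ∈ B' → B = B' := by
    intro B B' hB hB' x y hxy hxB hyB hxB' hyB'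
    obtain ⟨Bu, -, hu⟩ := huniq {x, y} (Finset.card_pair hxy)
    have h1 := hu B ⟨hB, by intro z hz; simp at hz; rcases hz with rfl | rfl <;> assumption⟩
    have h2 := hu B' ⟨hB', by intro z hz; simp at hz; rcases hz with rfl | rfl <;> assumption⟩
    rw [h1, h2]
  -- for each q ∈ B0 there is a block through p and q
  have key : ∀ q ∈ B0, ∃ B, B ∈ D ∧ p ∈ B ∧ q ∈ B := by
    intro q hq
    have hqp : p ≠ q := fun h => hpB0 (h ▸ hq)
    obtain ⟨B, ⟨hBD, hsub⟩, -⟩ := huniq {p, q} (Finset.card_pair hqp)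
    exact ⟨B, hBD, hsub (by simp), hsub (by simp)⟩
  -- choose such a block
  set bl : Fin v → Finset (Fin v) :=
    fun q => if h : ∃ B, B ∈ D ∧ p ∈ B ∧ q ∈ B then h.choose else ∅ with hbl_def
  have hbl : ∀ q ∈ B0, bl q ∈ D ∧ p ∈ bl q ∧ q ∈ bl q := by
    intro q hq
    simp only [hbl_def, dif_pos (key q hq)]
    exact (key q hq).choose_spec
  -- distinct points of B0 give distinct blocks through p
  have hne : ∀ q ∈ B0, ∀ q' ∈ B0, q ≠ q' → bl q ≠ bl q' := by
    intro q hq q' hq' hqq' heq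
    obtain ⟨hD1, hp1, hq1⟩ := hbl q hq
    obtain ⟨hD2, hp2, hq2⟩ := hbl q' hq'
    have : bl q = B0 := uniq2 (bl q) B0 hD1 hB0D q q' hqq' hq1 (heq ▸ hq2) hq hq'
    exact hpB0 (this ▸ hp1)
  -- the punctured blocks are pairwise disjoint
  have hdisj : (B0 : Set (Fin v)).PairwiseDisjoint fun q => (bl q).erase p := by
    intro q hq q' hq' hqq'
    simp only [Finset.coe_mem] at *
    refine Finset.disjoint_left.mpr ?_
    intro x hx hx'
    have hxp : x ≠ p := Finset.ne_of_mem_erase hx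
    obtain ⟨hD1, hp1, -⟩ := hbl q hq
    obtain ⟨hD2, hp2, -⟩ := hbl q' hq'
    exact hne q hq q' hq' hqq'
      (uniq2 (bl q) (bl q') hD1 hD2 x p hxp (Finset.mem_of_mem_erase hx) hp1
        (Finset.mem_of_mem_erase hx') hp2)
  -- count
  have hcount : (B0.biUnion fun q => (bl q).erase p).card = k * (k - 1) := by
    rw [Finset.card_biUnion (fun q hq q' hq' h => hdisj hq hq' h)]
    rw [Finset.sum_congr rfl (fun q hq => ?_), Finset.sum_const, hB0card, smul_eq_mul]
    rw [Finset.card_erase_of_mem (hbl q hq).2.1, hcard _ (hbl q hq).1]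
  have hsub : B0.biUnion (fun q => (bl q).erase p) ⊆ Finset.univ.erase p := by
    intro x hx
    simp only [Finset.mem_biUnion] at hx
    obtain ⟨q, -, hx⟩ := hx
    exact Finset.mem_erase.mpr ⟨Finset.ne_of_mem_erase hx, Finset.mem_univ x⟩
  have hle : k * (k - 1) ≤ v - 1 := by
    have := Finset.card_le_card hsub
    rwa [hcount, Finset.card_erase_of_mem (Finset.mem_univ p), Finset.card_univ,
      Fintype.card_fin] at this
  have hk2 : k ^ 2 = k * (k - 1) + k := by
    obtain ⟨m, rfl⟩ : ∃ m, k = m + 2 := ⟨k - 2, by omega⟩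
    simp [pow_two]; ring
  omega
end

section
/- Kramer–Mesner correspondence for Steiner 2-designs: let G act on the point set V, with T-orbits T_1,...,T_m on 2-subsets and K-orbits K_1,...,K_n on k-subsets, and let a_{ij} be the number of members of K_j containing a fixed representative of T_i. Then a union of k-orbits D = ⋃_{j ∈ S} K_j is a Steiner 2-design if and only if for every i, Σ_{j ∈ S} a_{ij} = 1. -/
/-- Kramer–Mesner correspondence for Steiner 2-designs: let the group `G` act on the
point set, let `R` be a set of representatives of pairwise distinct `G`-orbits of
`k`-subsets, and let `D` be the union of the orbits of the members of `R`. For a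
2-subset `p` and a representative `B ∈ R`, the Kramer–Mesner entry is the number of
members of the orbit of `B` containing `p`. Then `D` is a Steiner 2-design if and only
if for every 2-subset `p` the sum of the Kramer–Mesner entries over `R` equals 1. -/
theorem kramer_mesner_steiner {α : Type*} [Fintype α] [DecidableEq α]
    (G : Subgroup (Equiv.Perm α)) (k : ℕ)
    (R : Finset (Finset α)) (hcard : ∀ B ∈ R, B.card = k)
    (hdist : ∀ B₁ ∈ R, ∀ B₂ ∈ R, B₁ ≠ B₂ → ¬ ∃ g ∈ G, B₁.image ⇑g = B₂)
    (D : Set (Finset α))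
    (hD : D = ⋃ B ∈ R, {T : Finset α | ∃ g ∈ G, B.image ⇑g = T}) :
    ((∀ K ∈ D, K.card = k) ∧
      (∀ p : Finset α, p.card = 2 → ∃! K, K ∈ D ∧ p ⊆ K)) ↔
    (∀ p : Finset α, p.card = 2 →
      ∑ B ∈ R, Set.ncard {T : Finset α | (∃ g ∈ G, B.image ⇑g = T) ∧ p ⊆ T} = 1) := by
  classical
  have hA : ∀ K ∈ D, K.card = k := by
    intro K hK
    rw [hD] at hK
    simp only [Set.mem_iUnion, Set.mem_setOf_eq] at hK
    obtain ⟨B, hB, g, hg, rfl⟩ := hK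
    rw [Finset.card_image_of_injective _ g.injective]
    exact hcard B hB
  rw [and_iff_right hA]
  refine forall₂_congr fun p hp => ?_
  have hdisj : ∀ B₁ ∈ R, ∀ B₂ ∈ R, B₁ ≠ B₂ →
      Disjoint ({T : Finset α | (∃ g ∈ G, B₁.image ⇑g = T) ∧ p ⊆ T}.toFinset)
        ({T : Finset α | (∃ g ∈ G, B₂.image ⇑g = T) ∧ p ⊆ T}.toFinset) := by
    intro B₁ h₁ B₂ h₂ hne
    rw [Finset.disjoint_left]
    intro T hT₁ hT₂
    simp only [Set.mem_toFinset, Set.mem_setOf_eq] at hT₁ hT₂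
    obtain ⟨⟨g₁, hg₁, rfl⟩, -⟩ := hT₁
    obtain ⟨⟨g₂, hg₂, hT⟩, -⟩ := hT₂
    refine hdist B₂ h₂ B₁ h₁ hne.symm ⟨g₁⁻¹ * g₂, mul_mem (inv_mem hg₁) hg₂, ?_⟩
    have : (B₂.image ⇑g₂).image ⇑g₁⁻¹ = (B₁.image ⇑g₁).image ⇑g₁⁻¹ := by rw [hT]
    simpa [Finset.image_image, Function.comp_def, Equiv.Perm.mul_apply] using this
  have hset : {K | K ∈ D ∧ p ⊆ K} =
      ↑(R.biUnion fun B => {T : Finset α | (∃ g ∈ G, B.image ⇑g = T) ∧ p ⊆ T}.toFinset) := by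
    ext T
    simp only [hD, Set.mem_setOf_eq, Set.mem_iUnion, Finset.coe_biUnion, Finset.mem_coe,
      Set.mem_toFinset, Set.iUnion_coe_set]
    constructor
    · rintro ⟨⟨B, hB, hg⟩, hpT⟩; exact ⟨B, hB, hg, hpT⟩
    · rintro ⟨B, hB, hg, hpT⟩; exact ⟨⟨B, hB, hg⟩, hpT⟩
  have hcount : Set.ncard {K | K ∈ D ∧ p ⊆ K} =
      ∑ B ∈ R, Set.ncard {T : Finset α | (∃ g ∈ G, B.image ⇑g = T) ∧ p ⊆ T} := by
    rw [hset, Set.ncard_coe_finset, Finset.card_biUnion hdisj]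
    exact Finset.sum_congr rfl fun B _ => (Set.ncard_eq_toFinset_card' _).symm
  rw [← hcount]
  constructor
  · rintro ⟨K, hK, hu⟩
    exact Set.ncard_eq_one.mpr ⟨K, Set.eq_singleton_iff_unique_mem.mpr ⟨hK, fun x hx => hu x hx⟩⟩
  · intro h
    obtain ⟨a, ha⟩ := Set.ncard_eq_one.mp h
    obtain ⟨h1, h2⟩ := Set.eq_singleton_iff_unique_mem.mp ha
    exact ⟨a, h1, h2⟩
end
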